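/- Let G be a finite group, S a Sylow p-subgroup, and P ≤ S a subgroup that is fully normalized in F_S(G). Then P is fully centralized in F_S(G): |C_S(P)| ≥ |C_S(P')| for every P' ≤ S that is G-conjugate to P. -/

import Mathlib

/-!
If `P` is fully normalized, then `S ⊓ N_G(P)` has maximal order among the `p`-subgroups of
`N_G(P)`, so every `p`-subgroup of `N_G(P)` can be conjugated into it by an element of `N_G(P)`.
For a conjugate `gPg⁻¹ ≤ S`, the group `g⁻¹ C_S(gPg⁻¹) g` is a `p`-subgroup of
`C_G(P) ≤ N_G(P)`; conjugating it into `S ⊓ N_G(P)` by some `n ∈ N_G(P)` keeps it inside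
`C_G(P)`, because `n` normalizes `P`. It therefore lands in `S ⊓ C_G(P) = C_S(P)`.
-/

open Subgroup Pointwise

variable {G : Type*} [Group G]

-- `MulAut.conj g • P` unfolds to `P.map (MulAut.conj g).toMonoidHom`.
def Subgroup.IsFullyNormalized (S P : Subgroup G) : Prop :=
  ∀ g : G, MulAut.conj g • P ≤ S →
    Nat.card ↥(S ⊓ normalizer ((MulAut.conj g • P : Subgroup G) : Set G)) ≤
      Nat.card ↥(S ⊓ normalizer (P : Set G))

def Subgroup.IsFullyCentralized (S P : Subgroup G) : Prop :=
  ∀ g : G, MulAut.conj g • P ≤ S →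
    Nat.card ↥(S ⊓ centralizer ((MulAut.conj g • P : Subgroup G) : Set G)) ≤
      Nat.card ↥(S ⊓ centralizer (P : Set G))

namespace Subgroup

theorem card_conj_smul (g : G) (H : Subgroup G) :
    Nat.card ↥(MulAut.conj g • H) = Nat.card H :=
  Nat.card_congr (equivSMul (MulAut.conj g) H).symm.toEquiv

theorem conj_smul_centralizer_le (g : G) (H : Subgroup G) :
    MulAut.conj g • centralizer (H : Set G) ≤
      centralizer ((MulAut.conj g • H : Subgroup G) : Set G) :=
  map_centralizer_le_centralizer_image _ _

theorem conj_smul_normalizer (g : G) (H : Subgroup G) :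
    MulAut.conj g • normalizer (H : Set G) =
      normalizer ((MulAut.conj g • H : Subgroup G) : Set G) :=
  H.map_equiv_normalizer_eq (MulAut.conj g)

theorem conj_smul_eq_self_of_mem_normalizer {H : Subgroup G} {g : G}
    (hg : g ∈ normalizer (H : Set G)) : MulAut.conj g • H = H :=
  mem_normalizer_iff_map_conj_eq.mp hg

end Subgroup

variable {p : ℕ} [Fact p.Prime] [Finite G]

theorem IsPGroup.exists_conj_smul_le_of_forall_card_le {T W : Subgroup G}
    (hT : IsPGroup p T) (hTmax : ∀ V : Subgroup G, IsPGroup p V → Nat.card V ≤ Nat.card T)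
    (hW : IsPGroup p W) : ∃ g : G, MulAut.conj g • W ≤ T := by
  obtain ⟨U, hTU⟩ := hT.exists_le_sylow
  have hUT : (U : Subgroup G) = T := (eq_of_le_of_card_ge hTU (hTmax U U.isPGroup')).symm
  obtain ⟨U', hWU'⟩ := hW.exists_le_sylow
  obtain ⟨g, hg⟩ := MulAction.exists_smul_eq G U' U
  refine ⟨g, ?_⟩
  rw [← hUT, ← hg, Sylow.coe_subgroup_smul]
  exact pointwise_smul_le_pointwise_smul_iff.mpr hWU'

theorem IsPGroup.exists_mem_conj_smul_le_of_forall_card_le {H T W : Subgroup G}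
    (hT : IsPGroup p T) (hTH : T ≤ H)
    (hTmax : ∀ V ≤ H, IsPGroup p V → Nat.card V ≤ Nat.card T)
    (hW : IsPGroup p W) (hWH : W ≤ H) : ∃ h ∈ H, MulAut.conj h • W ≤ T := by
  have hTmax' (V : Subgroup H) (hV : IsPGroup p V) : Nat.card V ≤ Nat.card (T.subgroupOf H) :=
    calc Nat.card V = Nat.card (V.map H.subtype) :=
          Nat.card_congr (V.equivMapOfInjective _ H.subtype_injective).toEquiv
      _ ≤ Nat.card T := hTmax _ (map_subtype_le V) (hV.map H.subtype)
      _ = Nat.card (T.subgroupOf H) := Nat.card_congr (subgroupOfEquivOfLe hTH).symm.toEquiv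
  have hT' : IsPGroup p (T.subgroupOf H) := hT.of_equiv (subgroupOfEquivOfLe hTH).symm
  obtain ⟨h, hh⟩ := hT'.exists_conj_smul_le_of_forall_card_le hTmax'
    (hW.of_equiv (subgroupOfEquivOfLe hWH).symm)
  refine ⟨h, h.2, ?_⟩
  rw [conj_smul_subgroupOf hWH] at hh
  have hmap := map_mono (f := H.subtype) hh
  rwa [subgroupOf_map_subtype, subgroupOf_map_subtype,
    inf_of_le_left (conj_smul_le_of_le hWH h), inf_of_le_left hTH] at hmap

namespace Subgroup.IsFullyNormalized

variable {S : Sylow p G} {P : Subgroup G}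

theorem card_le_card_inf_normalizer (hfn : IsFullyNormalized S P) (hP : P ≤ S)
    {W : Subgroup G} (hW : IsPGroup p W) (hWN : W ≤ normalizer (P : Set G)) :
    Nat.card W ≤ Nat.card ↥((S : Subgroup G) ⊓ normalizer (P : Set G)) := by
  obtain ⟨V, hV⟩ := (hW.to_sup_of_normal_right' (S.isPGroup'.to_le hP) hWN).exists_le_sylow
  obtain ⟨k, hk⟩ := MulAction.exists_smul_eq G V S
  have hVS : MulAut.conj k • (V : Subgroup G) = S := by rw [← Sylow.coe_subgroup_smul, hk]
  have hPk : MulAut.conj k • P ≤ S :=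
    hVS ▸ pointwise_smul_le_pointwise_smul_iff.mpr (le_sup_right.trans hV)
  calc Nat.card W = Nat.card ↥(MulAut.conj k • W) := (card_conj_smul k W).symm
    _ ≤ Nat.card ↥((S : Subgroup G) ⊓
          normalizer ((MulAut.conj k • P : Subgroup G) : Set G)) := card_le_of_le <| by
        rw [← conj_smul_normalizer, ← hVS, ← smul_inf]
        exact pointwise_smul_le_pointwise_smul_iff.mpr (le_inf (le_sup_left.trans hV) hWN)
    _ ≤ _ := hfn k hPk

theorem isFullyCentralized (hfn : IsFullyNormalized S P) (hP : P ≤ S) :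
    IsFullyCentralized S P := by
  intro g _
  set C := centralizer (P : Set G)
  set R := (S : Subgroup G) ⊓ centralizer ((MulAut.conj g • P : Subgroup G) : Set G)
  have hRC : MulAut.conj g⁻¹ • R ≤ C :=
    calc MulAut.conj g⁻¹ • R
      _ ≤ MulAut.conj g⁻¹ • centralizer ((MulAut.conj g • P : Subgroup G) : Set G) :=
          pointwise_smul_le_pointwise_smul_iff.mpr inf_le_right
      _ ≤ C := (conj_smul_centralizer_le _ _).trans_eq (by rw [map_inv, inv_smul_smul])
  have hSN : IsPGroup p ↥((S : Subgroup G) ⊓ normalizer (P : Set G)) :=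
    S.isPGroup'.to_le inf_le_left
  obtain ⟨n, hnN, hnR⟩ := hSN.exists_mem_conj_smul_le_of_forall_card_le inf_le_right
    (fun _ hVN hV => hfn.card_le_card_inf_normalizer hP hV hVN)
    ((S.isPGroup'.to_le inf_le_left).of_equiv (equivSMul _ R))
    (hRC.trans (centralizer_le_normalizer _))
  have hnC : MulAut.conj n • MulAut.conj g⁻¹ • R ≤ C :=
    calc MulAut.conj n • MulAut.conj g⁻¹ • R
      _ ≤ MulAut.conj n • C := pointwise_smul_le_pointwise_smul_iff.mpr hRC
      _ ≤ C := (conj_smul_centralizer_le _ _).trans_eq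
          (by rw [conj_smul_eq_self_of_mem_normalizer hnN])
  calc Nat.card R = Nat.card ↥(MulAut.conj n • MulAut.conj g⁻¹ • R) := by
        rw [card_conj_smul, card_conj_smul]
    _ ≤ Nat.card ↥((S : Subgroup G) ⊓ normalizer (P : Set G) ⊓ C) :=
        card_le_of_le (le_inf hnR hnC)
    _ = Nat.card ↥((S : Subgroup G) ⊓ C) := by
        rw [inf_assoc, inf_of_le_right (centralizer_le_normalizer _)]

end Subgroup.IsFullyNormalized

theorem stmt_15 (p : ℕ) [Fact p.Prime] (G : Type) [Group G] [Finite G]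
    (S : Sylow p G) (P : Subgroup G) (hP : P ≤ (S : Subgroup G))
    -- P is fully normalized in F_S(G):
    (hfn : ∀ g : G, P.map (MulAut.conj g).toMonoidHom ≤ (S : Subgroup G) →
      Nat.card ((S : Subgroup G) ⊓ Subgroup.normalizer ((P.map (MulAut.conj g).toMonoidHom : Subgroup G) : Set G) : Subgroup G) ≤
        Nat.card ((S : Subgroup G) ⊓ Subgroup.normalizer (P : Set G) : Subgroup G)) :
    -- P is fully centralized in F_S(G):
    ∀ g : G, P.map (MulAut.conj g).toMonoidHom ≤ (S : Subgroup G) →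
      Nat.card ((S : Subgroup G) ⊓
          Subgroup.centralizer ((P.map (MulAut.conj g).toMonoidHom : Subgroup G) : Set G) :
          Subgroup G) ≤
        Nat.card ((S : Subgroup G) ⊓ Subgroup.centralizer (P : Set G) : Subgroup G) :=
  IsFullyNormalized.isFullyCentralized (S := S) hfn hP
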